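/- Correctness of the restricted task construction: let Π be a planning task, s a state in which the fresh atom ε is false, and 𝒜' ⊆ 𝒜 a set of actions. Then a nonempty sequence of actions b₁,…,bₘ of the 𝒜'-restricted task Π_{𝒜'} is a plan for Π_{𝒜'} starting from s if and only if b₁ is the new copy a⁺ of some a ∈ 𝒜', and the sequence obtained by replacing every copy a⁺ by its original a (and keeping original actions unchanged) is a plan for Π starting from s whose first action belongs to 𝒜'. -/

import Mathlib

namespace PS

/-- A ground planning task over atom type `Atom` and action type `Act`. -/
structure GroundTask (Atom Act : Type) where
  pre : Act → Set Atom
  add : Act → Set Atom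
  del : Act → Set Atom
  init : Set Atom
  goal : Set Atom

variable {Atom Act : Type}

/-- `succ(s,a) = (s \ del(a)) ∪ add(a)`. -/
def applyAct (P : GroundTask Atom Act) (s : Set Atom) (a : Act) : Set Atom :=
  (s \ P.del a) ∪ P.add a

/-- `IsPlanFrom P s π`: `π` is a valid plan for `P` starting from state `s`. -/
inductive IsPlanFrom (P : GroundTask Atom Act) : Set Atom → List Act → Prop
  | nil {s : Set Atom} : P.goal ⊆ s → IsPlanFrom P s []
  | cons {s : Set Atom} {a : Act} {l : List Act} :
      P.pre a ⊆ s → IsPlanFrom P (applyAct P s a) l → IsPlanFrom P s (a :: l)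

/-- The `𝒜'`-restricted task `Π_{𝒜'}`. Atoms are `Option Atom`, with the fresh atom
`ε = none` (initially false). Actions are either original actions (`Sum.inl`), which get `ε`
added to their precondition, or new copies `a⁺` (`Sum.inr`) of actions `a ∈ 𝒜'`, which are
identical to `a` except for the additional add effect `ε`. -/
def restrict (P : GroundTask Atom Act) (A' : Set Act) :
    GroundTask (Option Atom) (Act ⊕ {a : Act // a ∈ A'}) where
  pre := fun b => match b with
    | .inl a => insert none (some '' P.pre a)
    | .inr a => some '' P.pre a.val
  add := fun b => match b with
    | .inl a => some '' P.add a
    | .inr a => insert (none : Option Atom) (some '' P.add a.val)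
  del := fun b => match b with
    | .inl a => some '' P.del a
    | .inr a => some '' P.del a.val
  init := some '' P.init
  goal := some '' P.goal

/-- Replace each copy `a⁺` by its original `a`, keeping original actions unchanged. -/
def unrestrict {A' : Set Act} : Act ⊕ {a : Act // a ∈ A'} → Act :=
  Sum.elim id Subtype.val

/-!
With `ε` true, `Π_{𝒜'}` simulates `Π` step by step: its reachable states are
`insert ε (some '' t)`, both an action and its copy act on them like the original action, and
`ε` is never deleted. Without `ε`, as in `some '' s`, no original action is applicable, so a plan
must start with a copy `a⁺`, which makes `ε` true.
-/

theorem isPlanFrom_nil_iff (P : GroundTask Atom Act) (s : Set Atom) :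
    IsPlanFrom P s [] ↔ P.goal ⊆ s :=
  ⟨fun | .nil h => h, .nil⟩

theorem isPlanFrom_cons_iff (P : GroundTask Atom Act) (s : Set Atom) (a : Act) (l : List Act) :
    IsPlanFrom P s (a :: l) ↔ P.pre a ⊆ s ∧ IsPlanFrom P (applyAct P s a) l :=
  ⟨fun | .cons h h' => ⟨h, h'⟩, fun ⟨h, h'⟩ => .cons h h'⟩

theorem image_some_subset_insert_none_iff {α : Type*} {A B : Set α} :
    some '' A ⊆ insert none (some '' B) ↔ A ⊆ B := by
  rw [Set.subset_insert_iff_of_notMem (by simp)]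
  exact Set.image_subset_image_iff (Option.some_injective α)

section Restrict

variable (P : GroundTask Atom Act) (A' : Set Act)

theorem pre_restrict_subset_insert_none_iff (t : Set Atom) (b : Act ⊕ {a : Act // a ∈ A'}) :
    (restrict P A').pre b ⊆ insert none (some '' t) ↔ P.pre (unrestrict b) ⊆ t := by
  cases b with
  | inl a =>
    rw [restrict, Set.insert_subset_iff, image_some_subset_insert_none_iff]
    simp [unrestrict]
  | inr a => exact image_some_subset_insert_none_iff

theorem goal_restrict_subset_insert_none_iff (t : Set Atom) :
    (restrict P A').goal ⊆ insert none (some '' t) ↔ P.goal ⊆ t :=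
  image_some_subset_insert_none_iff

theorem applyAct_restrict_insert_none (t : Set Atom) (b : Act ⊕ {a : Act // a ∈ A'}) :
    applyAct (restrict P A') (insert none (some '' t)) b
      = insert none (some '' applyAct P t (unrestrict b)) := by
  ext (_ | x) <;> cases b <;> simp [applyAct, restrict, unrestrict]

theorem applyAct_restrict_inr (t : Set Atom) (a : {a : Act // a ∈ A'}) :
    applyAct (restrict P A') (some '' t) (.inr a) = insert none (some '' applyAct P t a) := by
  ext (_ | x) <;> simp [applyAct, restrict]

theorem pre_restrict_inl_not_subset_image_some (t : Set Atom) (a : Act) :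
    ¬ (restrict P A').pre (.inl a) ⊆ some '' t := fun h => by
  simpa using h (Set.mem_insert none _)

theorem isPlanFrom_restrict_insert_none_iff (t : Set Atom) (l : List (Act ⊕ {a : Act // a ∈ A'})) :
    IsPlanFrom (restrict P A') (insert none (some '' t)) l ↔ IsPlanFrom P t (l.map unrestrict) := by
  induction l generalizing t with
  | nil => simp only [isPlanFrom_nil_iff, List.map_nil, goal_restrict_subset_insert_none_iff]
  | cons b l ih =>
    simp only [isPlanFrom_cons_iff, List.map_cons, pre_restrict_subset_insert_none_iff,
      applyAct_restrict_insert_none, ih]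

end Restrict

/-- **Correctness of the restricted task construction**: for a state `s` in which the fresh
atom `ε` is false (embedded as `some '' s`), a nonempty action sequence `bs` is a plan for
`Π_{𝒜'}` starting from `s` iff its first action is the new copy `a⁺` of some `a ∈ 𝒜'` and
the sequence obtained by replacing every copy `a⁺` by its original `a` is a plan for `Π`
starting from `s` whose first action belongs to `𝒜'`. -/
theorem restricted_task_correct {Atom Act : Type} (P : GroundTask Atom Act)
    (s : Set Atom) (A' : Set Act)
    (bs : List (Act ⊕ {a : Act // a ∈ A'})) (hne : bs ≠ []) :
    IsPlanFrom (restrict P A') (some '' s) bs ↔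
      ((∃ a : {a : Act // a ∈ A'}, bs.head? = some (Sum.inr a)) ∧
        IsPlanFrom P s (bs.map unrestrict) ∧
        ∃ a ∈ A', (bs.map unrestrict).head? = some a) := by
  obtain ⟨b, l, rfl⟩ := List.exists_cons_of_ne_nil hne
  rcases b with a | a
  · simp [isPlanFrom_cons_iff, pre_restrict_inl_not_subset_image_some]
  · have hpre : (restrict P A').pre (.inr a) ⊆ some '' s ↔ P.pre a ⊆ s :=
      Set.image_subset_image_iff (Option.some_injective Atom)
    simp only [isPlanFrom_cons_iff, hpre, applyAct_restrict_inr,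
      isPlanFrom_restrict_insert_none_iff, List.map_cons, List.head?_cons]
    simp [unrestrict, a.prop]

end PS
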